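/- Assume every bidder's valuation is monotone gross substitute. If S ⊆ Ω is a maximal minimizer for a price vector p ∈ ℕ^m (with p_j ≥ 1 for all j ∈ S), then S is in dearth demand at p, i.e. S ∈ DD(p). -/
import Mathlib


/-- Utility of a bundle `S` at prices `p`: `v(S) - p(S)` (an integer). -/
def util {m : ℕ} (v : Finset (Fin m) → ℕ) (p : Fin m → ℕ) (S : Finset (Fin m)) : ℤ :=
  (v S : ℤ) - ∑ j ∈ S, (p j : ℤ)

/-- Demand collection: bundles of maximum utility at prices `p`. -/
def demand {m : ℕ} (v : Finset (Fin m) → ℕ) (p : Fin m → ℕ) : Finset (Finset (Fin m)) :=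
  Finset.univ.filter fun D => ∀ T : Finset (Fin m), util v p T ≤ util v p D

lemma demand_nonempty {m : ℕ} (v : Finset (Fin m) → ℕ) (p : Fin m → ℕ) :
    (demand v p).Nonempty := by
  obtain ⟨D, hD, hmax⟩ := Finset.exists_max_image (Finset.univ : Finset (Finset (Fin m)))
    (util v p) ⟨∅, Finset.mem_univ ∅⟩
  exact ⟨D, Finset.mem_filter.2 ⟨Finset.mem_univ D, fun T => hmax T (Finset.mem_univ T)⟩⟩

/-- Maximum utility of a bidder at prices `p`. -/
def uMax {m : ℕ} (v : Finset (Fin m) → ℕ) (p : Fin m → ℕ) : ℤ :=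
  Finset.univ.sup' Finset.univ_nonempty (util v p)

/-- A valuation is monotone with respect to inclusion. -/
def MonotoneVal {m : ℕ} (v : Finset (Fin m) → ℕ) : Prop :=
  ∀ ⦃S T : Finset (Fin m)⦄, S ⊆ T → v S ≤ v T

/-- Gross substitute: if `S` is demanded at `p` and `q ≥ p`, some demanded set at `q`
contains every item of `S` whose price did not change. -/
def GrossSub {m : ℕ} (v : Finset (Fin m) → ℕ) : Prop :=
  ∀ p q : Fin m → ℕ, p ≤ q → ∀ S ∈ demand v p,
    ∃ S' ∈ demand v q, ∀ j ∈ S, p j = q j → j ∈ S'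

/-- Requirement `l_p(S)` of a single bidder. -/
def req {m : ℕ} (v : Finset (Fin m) → ℕ) (p : Fin m → ℕ) (S : Finset (Fin m)) : ℕ :=
  (demand v p).inf' (demand_nonempty v p) fun D => (S ∩ D).card

/-- Redundant `h_p(S)` of a single bidder. -/
def red {m : ℕ} (v : Finset (Fin m) → ℕ) (p : Fin m → ℕ) (S : Finset (Fin m)) : ℕ :=
  (demand v p).sup' (demand_nonempty v p) fun D => (S ∩ D).card

/-- Auction requirement `l^p(S)`. -/
def reqAll {m n : ℕ} (v : Fin n → Finset (Fin m) → ℕ) (p : Fin m → ℕ) (S : Finset (Fin m)) : ℕ :=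
  ∑ i, req (v i) p S

/-- Auction redundant `h^p(S)`. -/
def redAll {m n : ℕ} (v : Fin n → Finset (Fin m) → ℕ) (p : Fin m → ℕ) (S : Finset (Fin m)) : ℕ :=
  ∑ i, red (v i) p S

/-- Lyapunov function `L(p) = Σ_i u_i(p) + Σ_j p_j`. -/
def lyap {m n : ℕ} (v : Fin n → Finset (Fin m) → ℕ) (p : Fin m → ℕ) : ℤ :=
  ∑ i, uMax (v i) p + ∑ j, (p j : ℤ)

/-- `p` is Walrasian: there is a partition of the items into demanded sets. -/
def IsWalrasian {m n : ℕ} (v : Fin n → Finset (Fin m) → ℕ) (p : Fin m → ℕ) : Prop :=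
  ∃ A : Fin n → Finset (Fin m),
    (∀ i j, i ≠ j → Disjoint (A i) (A j)) ∧
    Finset.univ.biUnion A = Finset.univ ∧
    ∀ i, A i ∈ demand (v i) p

/-- `p + 1_S`. -/
def incr {m : ℕ} (p : Fin m → ℕ) (S : Finset (Fin m)) : Fin m → ℕ :=
  fun j => if j ∈ S then p j + 1 else p j

/-- `p - 1_S`. -/
def decr {m : ℕ} (p : Fin m → ℕ) (S : Finset (Fin m)) : Fin m → ℕ :=
  fun j => if j ∈ S then p j - 1 else p j

/-- `S` is over-demanded at `p`: `l^p(S) > |S|`. -/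
def OverDemanded {m n : ℕ} (v : Fin n → Finset (Fin m) → ℕ) (p : Fin m → ℕ)
    (S : Finset (Fin m)) : Prop :=
  S.card < reqAll v p S

/-- `S` is weakly over-demanded at `p`: `l^p(S) ≥ |S|`. -/
def WeaklyOverDemanded {m n : ℕ} (v : Fin n → Finset (Fin m) → ℕ) (p : Fin m → ℕ)
    (S : Finset (Fin m)) : Prop :=
  S.card ≤ reqAll v p S

/-- `S` is under-demanded at `p`: `h^p(S) < |S|`. -/
def UnderDemanded {m n : ℕ} (v : Fin n → Finset (Fin m) → ℕ) (p : Fin m → ℕ)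
    (S : Finset (Fin m)) : Prop :=
  redAll v p S < S.card

/-- `S` is weakly under-demanded at `p`: `h^p(S) ≤ |S|`. -/
def WeaklyUnderDemanded {m n : ℕ} (v : Fin n → Finset (Fin m) → ℕ) (p : Fin m → ℕ)
    (S : Finset (Fin m)) : Prop :=
  redAll v p S ≤ S.card

/-- `S ∈ ED(p)`: `S` is over-demanded at `p` and no nonempty `T ⊆ S` is weakly
under-demanded at `p + 1_S`. -/
def ExcessDemand {m n : ℕ} (v : Fin n → Finset (Fin m) → ℕ) (p : Fin m → ℕ)
    (S : Finset (Fin m)) : Prop :=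
  OverDemanded v p S ∧
    ∀ T ⊆ S, T ≠ ∅ → ¬ WeaklyUnderDemanded v (incr p S) T

/-- `S ∈ DD(p)`: `S` is under-demanded at `p` and no nonempty `T ⊆ S` is weakly
over-demanded at `p - 1_S`. -/
def DearthDemand {m n : ℕ} (v : Fin n → Finset (Fin m) → ℕ) (p : Fin m → ℕ)
    (S : Finset (Fin m)) : Prop :=
  UnderDemanded v p S ∧
    ∀ T ⊆ S, T ≠ ∅ → ¬ WeaklyOverDemanded v (decr p S) T

/-- `S` is a minimal minimizer for `p`. -/
def MinimalMinimizer {m n : ℕ} (v : Fin n → Finset (Fin m) → ℕ) (p : Fin m → ℕ)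
    (S : Finset (Fin m)) : Prop :=
  lyap v (incr p S) < lyap v p ∧
    (∀ T : Finset (Fin m), lyap v (incr p S) ≤ lyap v (incr p T)) ∧
    ∀ T : Finset (Fin m), T ⊂ S → lyap v (incr p S) < lyap v (incr p T)

/-- `S` is a maximal minimizer for `p`. -/
def MaximalMinimizer {m n : ℕ} (v : Fin n → Finset (Fin m) → ℕ) (p : Fin m → ℕ)
    (S : Finset (Fin m)) : Prop :=
  lyap v (decr p S) < lyap v p ∧
    (∀ T : Finset (Fin m), lyap v (decr p S) ≤ lyap v (decr p T)) ∧
    ∀ T : Finset (Fin m), T ⊂ S → lyap v (decr p S) < lyap v (decr p T)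


section AuxStmt9

variable {m : ℕ}

lemma mem_demand_iff {v : Finset (Fin m) → ℕ} {p : Fin m → ℕ} {D : Finset (Fin m)} :
    D ∈ demand v p ↔ ∀ T, util v p T ≤ util v p D := by
  simp [demand]

lemma uMax_eq {v : Finset (Fin m) → ℕ} {p : Fin m → ℕ} {D : Finset (Fin m)}
    (hD : D ∈ demand v p) : uMax v p = util v p D :=
  le_antisymm (Finset.sup'_le _ _ fun T _ => (mem_demand_iff.1 hD) T)
    (Finset.le_sup' _ (Finset.mem_univ D))

lemma util_le_uMax (v : Finset (Fin m) → ℕ) (p : Fin m → ℕ) (T : Finset (Fin m)) :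
    util v p T ≤ uMax v p := Finset.le_sup' _ (Finset.mem_univ T)

lemma sum_incr (q : Fin m → ℕ) (T D : Finset (Fin m)) :
    ∑ j ∈ D, ((incr q T j : ℕ) : ℤ) = ∑ j ∈ D, (q j : ℤ) + ((T ∩ D).card : ℤ) := by
  have h : ∀ j ∈ D, ((incr q T j : ℕ) : ℤ) = (q j : ℤ) + (if j ∈ T then 1 else 0) := by
    intro j _
    unfold incr
    split_ifs <;> push_cast <;> ring
  rw [Finset.sum_congr rfl h, Finset.sum_add_distrib, Finset.sum_ite_mem]
  rw [Finset.sum_const, Finset.inter_comm]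
  simp

lemma sum_decr (p : Fin m → ℕ) (S D : Finset (Fin m)) (hpos : ∀ j ∈ S, 1 ≤ p j) :
    ∑ j ∈ D, ((decr p S j : ℕ) : ℤ) = ∑ j ∈ D, (p j : ℤ) - ((S ∩ D).card : ℤ) := by
  have h : ∀ j ∈ D, ((decr p S j : ℕ) : ℤ) = (p j : ℤ) - (if j ∈ S then 1 else 0) := by
    intro j _
    unfold decr
    split_ifs with hjS
    · rw [Nat.cast_sub (hpos j hjS)]; simp
    · simp
  rw [Finset.sum_congr rfl h, Finset.sum_sub_distrib, Finset.sum_ite_mem]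
  rw [Finset.sum_const, Finset.inter_comm]
  simp

lemma util_incr (v : Finset (Fin m) → ℕ) (q : Fin m → ℕ) (T D : Finset (Fin m)) :
    util v (incr q T) D = util v q D - ((T ∩ D).card : ℤ) := by
  unfold util
  rw [sum_incr]
  ring

lemma util_decr (v : Finset (Fin m) → ℕ) (p : Fin m → ℕ) (S D : Finset (Fin m))
    (hpos : ∀ j ∈ S, 1 ≤ p j) :
    util v (decr p S) D = util v p D + ((S ∩ D).card : ℤ) := by
  unfold util
  rw [sum_decr p S D hpos]
  ring

lemma req_le {v : Finset (Fin m) → ℕ} {p : Fin m → ℕ} {D : Finset (Fin m)}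
    (hD : D ∈ demand v p) (T : Finset (Fin m)) : req v p T ≤ (T ∩ D).card :=
  Finset.inf'_le _ hD

lemma card_le_red {v : Finset (Fin m) → ℕ} {p : Fin m → ℕ} {D : Finset (Fin m)}
    (hD : D ∈ demand v p) (S : Finset (Fin m)) : (S ∩ D).card ≤ red v p S :=
  Finset.le_sup' (fun D => (S ∩ D).card) hD

lemma exists_red (v : Finset (Fin m) → ℕ) (p : Fin m → ℕ) (S : Finset (Fin m)) :
    ∃ D ∈ demand v p, (S ∩ D).card = red v p S := by
  obtain ⟨D, hD, h⟩ := Finset.exists_mem_eq_sup' (demand_nonempty v p)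
    (fun D => (S ∩ D).card)
  exact ⟨D, hD, h.symm⟩

/-- Core lemma: for a GS valuation, some set attaining the requirement `l_q(T)` is
demanded both at `q` and at `q + 1_T`. -/
lemma key_demand (v : Finset (Fin m) → ℕ) (hgs : GrossSub v) (T : Finset (Fin m)) :
    ∀ q : Fin m → ℕ, ∃ D, D ∈ demand v q ∧ D ∈ demand v (incr q T) ∧
      (T ∩ D).card = req v q T := by
  induction T using Finset.induction_on with
  | empty =>
    intro q
    obtain ⟨D, hD⟩ := demand_nonempty v q
    have h0 : incr q ∅ = q := by funext j; simp [incr]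
    have hreq : req v q ∅ = 0 := by
      simp [req, Finset.empty_inter]
    refine ⟨D, hD, by rw [h0]; exact hD, by simp [hreq]⟩
  | @insert j T' hj ih =>
    intro q
    obtain ⟨D0, hD0q, hD0r, hD0c⟩ := ih q
    set r := incr q T' with hr
    set l' := req v q T' with hl'
    have hur : uMax v r = uMax v q - (l' : ℤ) := by
      rw [uMax_eq hD0r, util_incr, ← uMax_eq hD0q, hD0c]
    have hrT : incr q (insert j T') = incr r {j} := by
      funext x
      simp only [incr, hr, Finset.mem_insert, Finset.mem_singleton]
      by_cases hx : x = j
      · simp [hx, hj]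
      · by_cases hx2 : x ∈ T' <;> simp [hx, hx2]
    -- characterization helpers
    have hdemr_q : ∀ D, D ∈ demand v r → (T' ∩ D).card = l' → D ∈ demand v q := by
      intro D hDr hDc
      have h1 : util v q D = uMax v q := by
        have := uMax_eq hDr
        rw [util_incr, hDc] at this
        linarith [hur.symm.trans this]
      rw [mem_demand_iff]
      intro E
      rw [h1]
      exact util_le_uMax v q E
    have hdemr_card : ∀ D, D ∈ demand v r → (T' ∩ D).card ≤ l' := by
      intro D hDr
      have h1 : util v r D = uMax v q - (l' : ℤ) := by rw [← uMax_eq hDr, hur]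
      have h2 : util v q D ≤ uMax v q := util_le_uMax v q D
      rw [util_incr] at h1
      have : ((T' ∩ D).card : ℤ) ≤ (l' : ℤ) := by linarith
      exact_mod_cast this
    have hdemq_r : ∀ D, D ∈ demand v q → (T' ∩ D).card = l' → D ∈ demand v r := by
      intro D hDq hDc
      have h1 : util v r D = uMax v q - (l' : ℤ) := by
        rw [util_incr, hDc, ← uMax_eq hDq]
      rw [mem_demand_iff]
      intro E
      have h2 : util v r E ≤ uMax v r := util_le_uMax v r E
      rw [h1]
      linarith [hur]
    by_cases hε : ∃ D1 ∈ demand v r, j ∉ D1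
    · -- some demanded set at r avoids j : price increase on j does not change uMax
      obtain ⟨D1, hD1, hjD1⟩ := hε
      have hsing1 : ({j} ∩ D1 : Finset (Fin m)) = ∅ := by
        ext x; simp only [Finset.mem_inter, Finset.mem_singleton, Finset.notMem_empty,
          iff_false]
        rintro ⟨rfl, hx⟩; exact hjD1 hx
      have hD1' : D1 ∈ demand v (incr r {j}) := by
        rw [mem_demand_iff]
        intro E
        have h1 : util v (incr r {j}) D1 = util v r D1 := by
          rw [util_incr, hsing1]; simp
        have h2 : util v (incr r {j}) E ≤ util v r E := by
          rw [util_incr]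
          have : (0 : ℤ) ≤ (({j} ∩ E).card : ℤ) := by positivity
          linarith
        calc util v (incr r {j}) E ≤ util v r E := h2
          _ ≤ util v r D1 := mem_demand_iff.1 hD1 E
          _ = util v (incr r {j}) D1 := h1.symm
      have hle : r ≤ incr r {j} := by
        intro x
        by_cases hxj : x ∈ ({j} : Finset (Fin m)) <;> simp [incr, hxj]
      obtain ⟨D', hD'mem, hD'keep⟩ := hgs r (incr r {j}) hle D0 hD0r
      have hsub : ∀ x ∈ D0, x ≠ j → x ∈ D' := by
        intro x hx hxj
        refine hD'keep x hx ?_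
        unfold incr
        simp [hxj]
      have hu' : uMax v (incr r {j}) = uMax v r := by
        rw [uMax_eq hD1', util_incr, hsing1, ← uMax_eq hD1]
        simp
      have hjD' : j ∉ D' := by
        intro hjin
        have hsing2 : ({j} ∩ D' : Finset (Fin m)) = {j} := by
          ext x; simp only [Finset.mem_inter, Finset.mem_singleton]
          constructor
          · rintro ⟨h, _⟩; exact h
          · rintro rfl; exact ⟨rfl, hjin⟩
        have h4 : util v (incr r {j}) D' = uMax v (incr r {j}) := (uMax_eq hD'mem).symm
        rw [util_incr, hsing2, hu'] at h4
        have h3 : util v r D' ≤ uMax v r := util_le_uMax v r D'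
        simp at h4
        linarith
      have hsing3 : ({j} ∩ D' : Finset (Fin m)) = ∅ := by
        ext x; simp only [Finset.mem_inter, Finset.mem_singleton, Finset.notMem_empty,
          iff_false]
        rintro ⟨rfl, hx⟩; exact hjD' hx
      have hD'r : D' ∈ demand v r := by
        have h4 : util v r D' = uMax v r := by
          have := (uMax_eq hD'mem).symm
          rw [util_incr, hsing3, hu'] at this
          simpa using this
        rw [mem_demand_iff]
        intro E
        rw [h4]
        exact util_le_uMax v r E
      have hcard_ge : l' ≤ (T' ∩ D').card := by
        have hss : T' ∩ D0 ⊆ T' ∩ D' := by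
          intro x hx
          rw [Finset.mem_inter] at hx ⊢
          refine ⟨hx.1, hsub x hx.2 ?_⟩
          rintro rfl
          exact hj hx.1
        calc l' = (T' ∩ D0).card := hD0c.symm
          _ ≤ (T' ∩ D').card := Finset.card_le_card hss
      have hceq : (T' ∩ D').card = l' := le_antisymm (hdemr_card D' hD'r) hcard_ge
      have hD'q : D' ∈ demand v q := hdemr_q D' hD'r hceq
      have hins : (insert j T' ∩ D' : Finset (Fin m)) = T' ∩ D' := by
        rw [Finset.insert_inter_of_notMem hjD']
      have hreq : req v q (insert j T') = l' := by
        apply le_antisymm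
        · have := req_le hD'q (insert j T')
          rw [hins, hceq] at this
          exact this
        · apply Finset.le_inf'
          intro D hD
          calc l' ≤ (T' ∩ D).card := req_le hD T'
            _ ≤ (insert j T' ∩ D).card :=
              Finset.card_le_card (Finset.inter_subset_inter (Finset.subset_insert j T')
                (le_refl D))
      refine ⟨D', hD'q, ?_, ?_⟩
      · rw [hrT]; exact hD'mem
      · rw [hins, hceq, hreq]
    · -- every demanded set at r contains j
      push_neg at hε
      have hjD0 : j ∈ D0 := hε D0 hD0r
      have hsing0 : ({j} ∩ D0 : Finset (Fin m)) = {j} := by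
        ext x; simp only [Finset.mem_inter, Finset.mem_singleton]
        constructor
        · rintro ⟨h, _⟩; exact h
        · rintro rfl; exact ⟨rfl, hjD0⟩
      have hD0' : D0 ∈ demand v (incr r {j}) := by
        rw [mem_demand_iff]
        intro E
        have e0 : util v (incr r {j}) D0 = util v r D0 - 1 := by
          rw [util_incr, hsing0]; simp
        by_cases hjE : j ∈ E
        · have hsingE : ({j} ∩ E : Finset (Fin m)) = {j} := by
            ext x; simp only [Finset.mem_inter, Finset.mem_singleton]
            constructor
            · rintro ⟨h, _⟩; exact h
            · rintro rfl; exact ⟨rfl, hjE⟩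
          have : util v (incr r {j}) E = util v r E - 1 := by
            rw [util_incr, hsingE]; simp
          rw [this, e0, ← uMax_eq hD0r]
          have := util_le_uMax v r E
          linarith
        · have hsingE : ({j} ∩ E : Finset (Fin m)) = ∅ := by
            ext x; simp only [Finset.mem_inter, Finset.mem_singleton, Finset.notMem_empty,
              iff_false]
            rintro ⟨rfl, hx⟩; exact hjE hx
          have hE1 : util v (incr r {j}) E = util v r E := by
            rw [util_incr, hsingE]; simp
          have hEnd : E ∉ demand v r := fun hEr => hjE (hε E hEr)
          have hlt : util v r E < uMax v r := by
            rcases lt_or_eq_of_le (util_le_uMax v r E) with h | h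
            · exact h
            · exfalso
              apply hEnd
              rw [mem_demand_iff]
              intro F
              rw [h]
              exact util_le_uMax v r F
          rw [hE1, e0, ← uMax_eq hD0r]
          omega
      have hcard0 : (insert j T' ∩ D0 : Finset (Fin m)).card = l' + 1 := by
        rw [Finset.insert_inter_of_mem hjD0, Finset.card_insert_of_notMem, hD0c]
        intro hx
        exact hj (Finset.mem_inter.1 hx).1
      have hreq : req v q (insert j T') = l' + 1 := by
        apply le_antisymm
        · have := req_le hD0q (insert j T')
          rw [hcard0] at this
          exact this
        · apply Finset.le_inf'
          intro D hD
          have h5 : l' ≤ (T' ∩ D).card := req_le hD T'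
          rcases eq_or_lt_of_le h5 with heq | hlt
          · have hDr : D ∈ demand v r := hdemq_r D hD heq.symm
            have hjD : j ∈ D := hε D hDr
            rw [Finset.insert_inter_of_mem hjD, Finset.card_insert_of_notMem, ← heq]
            intro hx
            exact hj (Finset.mem_inter.1 hx).1
          · calc l' + 1 ≤ (T' ∩ D).card := hlt
              _ ≤ (insert j T' ∩ D).card :=
                Finset.card_le_card (Finset.inter_subset_inter (Finset.subset_insert j T')
                  (le_refl D))
      refine ⟨D0, hD0q, ?_, ?_⟩
      · rw [hrT]; exact hD0'
      · rw [hcard0, hreq]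

lemma uMax_incr_eq (v : Finset (Fin m) → ℕ) (hgs : GrossSub v) (q : Fin m → ℕ)
    (T : Finset (Fin m)) : uMax v (incr q T) = uMax v q - (req v q T : ℤ) := by
  obtain ⟨D, hq, hr, hc⟩ := key_demand v hgs T q
  rw [uMax_eq hr, util_incr, ← uMax_eq hq, hc]

end AuxStmt9

theorem stmt9 {m n : ℕ} (v : Fin n → Finset (Fin m) → ℕ)
    (hzero : ∀ i, v i ∅ = 0) (hmono : ∀ i, MonotoneVal (v i))
    (hgs : ∀ i, GrossSub (v i))
    (p : Fin m → ℕ) (S : Finset (Fin m)) (hpos : ∀ j ∈ S, 1 ≤ p j)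
    (hmax : MaximalMinimizer v p S) :
    DearthDemand v p S := by
  obtain ⟨h1, h2, h3⟩ := hmax
  have hsd : ∑ j, ((decr p S j : ℕ) : ℤ) = ∑ j, (p j : ℤ) - (S.card : ℤ) := by
    rw [sum_decr p S Finset.univ hpos, Finset.inter_univ]
  constructor
  · -- UnderDemanded
    have hsum : ∀ i, uMax (v i) p + ((red (v i) p S : ℕ) : ℤ) ≤ uMax (v i) (decr p S) := by
      intro i
      obtain ⟨D, hD, hc⟩ := exists_red (v i) p S
      calc uMax (v i) p + ((red (v i) p S : ℕ) : ℤ)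
          = util (v i) p D + ((S ∩ D).card : ℤ) := by rw [uMax_eq hD, hc]
        _ = util (v i) (decr p S) D := (util_decr (v i) p S D hpos).symm
        _ ≤ uMax (v i) (decr p S) := util_le_uMax _ _ _
    have hsum2 : ∑ i, (uMax (v i) p + ((red (v i) p S : ℕ) : ℤ)) ≤
        ∑ i, uMax (v i) (decr p S) := Finset.sum_le_sum fun i _ => hsum i
    rw [Finset.sum_add_distrib] at hsum2
    have hL : lyap v (decr p S) < lyap v p := h1
    unfold lyap at hL
    rw [hsd] at hL
    have hcast : ((redAll v p S : ℕ) : ℤ) = ∑ i, ((red (v i) p S : ℕ) : ℤ) := by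
      unfold redAll
      push_cast
      rfl
    have : ((redAll v p S : ℕ) : ℤ) < (S.card : ℤ) := by
      rw [hcast]
      linarith
    exact_mod_cast this
  · intro T hTS hTne hWOD
    have hTnon : T.Nonempty := Finset.nonempty_iff_ne_empty.2 hTne
    have hq : incr (decr p S) T = decr p (S \ T) := by
      funext x
      unfold incr decr
      by_cases hxT : x ∈ T
      · have hxS : x ∈ S := hTS hxT
        have hx1 : 1 ≤ p x := hpos x hxS
        have hxnot : x ∉ S \ T := by simp [Finset.mem_sdiff, hxT]
        simp only [hxT, hxS, hxnot, if_true, if_false]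
        omega
      · by_cases hxS : x ∈ S
        · have hxin : x ∈ S \ T := Finset.mem_sdiff.2 ⟨hxS, hxT⟩
          simp only [hxT, hxS, hxin, if_true, if_false]
        · have hxnot : x ∉ S \ T := by simp [Finset.mem_sdiff, hxS]
          simp only [hxT, hxS, hxnot, if_false]
    have hWOD' : (T.card : ℤ) ≤ ∑ i, ((req (v i) (decr p S) T : ℕ) : ℤ) := by
      have : T.card ≤ reqAll v (decr p S) T := hWOD
      unfold reqAll at this
      exact_mod_cast this
    have hlyap : lyap v (decr p (S \ T)) ≤ lyap v (decr p S) := by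
      rw [← hq]
      unfold lyap
      have e1 : ∑ i, uMax (v i) (incr (decr p S) T) =
          ∑ i, (uMax (v i) (decr p S) - ((req (v i) (decr p S) T : ℕ) : ℤ)) :=
        Finset.sum_congr rfl fun i _ => uMax_incr_eq (v i) (hgs i) _ _
      have e2 : ∑ j, ((incr (decr p S) T j : ℕ) : ℤ) =
          ∑ j, ((decr p S j : ℕ) : ℤ) + (T.card : ℤ) := by
        rw [sum_incr, Finset.inter_univ]
      rw [e1, e2, Finset.sum_sub_distrib]
      linarith
    have hss : S \ T ⊂ S := Finset.sdiff_ssubset hTS hTnon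
    have := h3 (S \ T) hss
    linarith
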